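/- arXiv:1412.7906 — 3 statements merged into one kernel-verified Lean document; each statement's English description precedes it below -/
import Mathlib

section
/- The power series F(z) = Σ c_n z^n defined by the functional equation F(z) = (1+z+z^2)F(z^4) - z^4 F(z^16) with F(0)=1 has all coefficients c_n in {0,1}. -/
/-!
Comparing coefficients of `z^(4q+r)` in the functional equation gives `c(4q+1) = c(4q+2) = c q`,
`c(4q+3) = 0`, and `c(4q) = c q - [q ≡ 1 (mod 4)] · c((q-1)/4)`. In the exceptional case
`q = 4k+1` the first rule gives `c q = c k`, so `c(4q) = 0`. Hence every coefficient is either `0`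
or a copy of a coefficient of smaller index, and by strong induction it is `0` or `c 0`.
-/

variable {R : Type*} [AddCommGroup R]

def SolvesFunctionalEquation (c : ℕ → R) : Prop :=
  ∀ n : ℕ,
    c n = (∑ i ∈ Finset.range 3, if 4 ∣ (n - i) ∧ i ≤ n then c ((n - i) / 4) else 0)
          - (if 16 ∣ (n - 4) ∧ 4 ≤ n then c ((n - 4) / 16) else 0)

namespace SolvesFunctionalEquation

variable {c : ℕ → R}

theorem coeff_four_mul_add_one (hc : SolvesFunctionalEquation c) (q : ℕ) :
    c (4 * q + 1) = c q := by
  have h := hc (4 * q + 1)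
  rw [Finset.sum_range_succ, Finset.sum_range_succ, Finset.sum_range_one, if_neg (by omega),
    if_pos (by omega), if_neg (by omega), if_neg (by omega)] at h
  simpa [show (4 * q + 1 - 1) / 4 = q by omega] using h

theorem coeff_four_mul_add_two (hc : SolvesFunctionalEquation c) (q : ℕ) :
    c (4 * q + 2) = c q := by
  have h := hc (4 * q + 2)
  rw [Finset.sum_range_succ, Finset.sum_range_succ, Finset.sum_range_one, if_neg (by omega),
    if_neg (by omega), if_pos (by omega), if_neg (by omega)] at h
  simpa [show (4 * q + 2 - 2) / 4 = q by omega] using h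

theorem coeff_four_mul_add_three (hc : SolvesFunctionalEquation c) (q : ℕ) :
    c (4 * q + 3) = 0 := by
  have h := hc (4 * q + 3)
  rw [Finset.sum_range_succ, Finset.sum_range_succ, Finset.sum_range_one, if_neg (by omega),
    if_neg (by omega), if_neg (by omega), if_neg (by omega)] at h
  simpa using h

theorem coeff_four_mul_of_mod_four_ne_one (hc : SolvesFunctionalEquation c) {q : ℕ}
    (hq : q % 4 ≠ 1) : c (4 * q) = c q := by
  have h := hc (4 * q)
  rw [Finset.sum_range_succ, Finset.sum_range_succ, Finset.sum_range_one, if_pos (by omega),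
    if_neg (by omega), if_neg (by omega), if_neg (by omega)] at h
  simpa [show (4 * q - 0) / 4 = q by omega] using h

theorem coeff_four_mul_of_mod_four_eq_one (hc : SolvesFunctionalEquation c) {q : ℕ}
    (hq : q % 4 = 1) : c (4 * q) = 0 := by
  obtain ⟨k, rfl⟩ : ∃ k, q = 4 * k + 1 := ⟨q / 4, by omega⟩
  have h := hc (4 * (4 * k + 1))
  rw [Finset.sum_range_succ, Finset.sum_range_succ, Finset.sum_range_one, if_pos (by omega),
    if_neg (by omega), if_neg (by omega), if_pos (by omega)] at h
  rw [h, show (4 * (4 * k + 1) - 0) / 4 = 4 * k + 1 by omega,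
    show (4 * (4 * k + 1) - 4) / 16 = k by omega, hc.coeff_four_mul_add_one]
  simp

theorem eq_zero_or_eq_coeff_zero (hc : SolvesFunctionalEquation c) (n : ℕ) :
    c n = 0 ∨ c n = c 0 := by
  induction n using Nat.strong_induction_on with
  | _ n ih =>
  obtain rfl | hn := eq_or_ne n 0
  · exact Or.inr rfl
  have ih_div : c (n / 4) = 0 ∨ c (n / 4) = c 0 := ih _ (by omega)
  rw [← Nat.div_add_mod n 4]
  obtain h | h | h | h : n % 4 = 0 ∨ n % 4 = 1 ∨ n % 4 = 2 ∨ n % 4 = 3 := by omega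
  · rw [h, add_zero]
    by_cases hq : n / 4 % 4 = 1
    · exact Or.inl (hc.coeff_four_mul_of_mod_four_eq_one hq)
    · rwa [hc.coeff_four_mul_of_mod_four_ne_one hq]
  · rwa [h, hc.coeff_four_mul_add_one]
  · rwa [h, hc.coeff_four_mul_add_two]
  · exact Or.inl (h ▸ hc.coeff_four_mul_add_three _)

end SolvesFunctionalEquation

/-- The power series `F(z) = Σ c_n z^n` defined by
`F(z) = (1+z+z^2)·F(z^4) - z^4·F(z^16)` with `F(0) = 1` has all coefficients in `{0,1}`.
The functional equation is encoded coefficientwise: the `n`-th coefficient of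
`(1+z+z^2)·F(z^4)` is `Σ_{i=0}^{2} [4 ∣ n-i ∧ i ≤ n] · c((n-i)/4)`, and that of
`z^4·F(z^16)` is `[16 ∣ n-4 ∧ 4 ≤ n] · c((n-4)/16)`. -/
theorem stmt_0 (c : ℕ → ℤ) (h0 : c 0 = 1)
    (heq : ∀ n : ℕ,
      c n = (∑ i ∈ Finset.range 3, if 4 ∣ (n - i) ∧ i ≤ n then c ((n - i) / 4) else 0)
            - (if 16 ∣ (n - 4) ∧ 4 ≤ n then c ((n - 4) / 16) else 0)) :
    ∀ n : ℕ, c n = 0 ∨ c n = 1 :=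
  h0 ▸ SolvesFunctionalEquation.eq_zero_or_eq_coeff_zero heq
end

section
/- The limit of μ(z) = F(z)/F(z^4) as z → 1⁻ exists and equals (3+√5)/2 = ρ², where ρ = (1+√5)/2 is the golden ratio. -/
/-!
Write `μ z = F z / F (z ^ 4)`. The functional equation becomes
`μ z = 1 + z + z ^ 2 - z ^ 4 / μ (z ^ 4)`, and `μ ≥ 1` on `[0, 1)` because `F` is increasing there
with `F ≥ 1`. Near `z = 1` this is an `O(1 - z)` perturbation of the map `x ↦ 3 - 1 / x`, which
contracts `[1, ∞)` by the factor `ψ ^ 2 = φ⁻² < 1` towards its fixed point `φ ^ 2`. Unrolling the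
recurrence `n` times along `z, z ^ 4, z ^ 16, …` gives `|μ z - φ ^ 2| ≤ Cₙ (1 - z) + 2 ψ ^ (2 n)`.
-/

open Filter Set Topology Real
open scoped goldenRatio

lemma one_sub_pow_le_mul_one_sub {z : ℝ} (hz : -1 ≤ z) (m : ℕ) : 1 - z ^ m ≤ m * (1 - z) := by
  have := one_add_mul_le_pow (a := z - 1) (by linarith) m
  simp only [add_sub_cancel] at this
  linarith

lemma pow_mem_Ico_zero_one {z : ℝ} (hz : z ∈ Ico (0 : ℝ) 1) {m : ℕ} (hm : m ≠ 0) :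
    z ^ m ∈ Ico (0 : ℝ) 1 :=
  ⟨pow_nonneg hz.1 m, pow_lt_one₀ hz.1 hz.2 hm⟩

section Iteration

variable {e : ℝ → ℝ} {A q M : ℝ} {m : ℕ}

lemma exists_le_mul_one_sub_add_pow_mul (hm : m ≠ 0) (hA : 0 ≤ A) (hq : 0 ≤ q)
    (heM : ∀ z ∈ Ico (0 : ℝ) 1, e z ≤ M)
    (hstep : ∀ z ∈ Ico (0 : ℝ) 1, e z ≤ A * (1 - z) + q * e (z ^ m)) (n : ℕ) :
    ∃ C, 0 ≤ C ∧ ∀ z ∈ Ico (0 : ℝ) 1, e z ≤ C * (1 - z) + q ^ n * M := by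
  induction n with
  | zero => exact ⟨0, le_rfl, fun z hz => by simpa using heM z hz⟩
  | succ n ih =>
    obtain ⟨C, hC, hCe⟩ := ih
    refine ⟨A + q * (C * m), by positivity, fun z hz => ?_⟩
    have hbern : C * (1 - z ^ m) ≤ C * m * (1 - z) := by
      rw [mul_assoc]
      exact mul_le_mul_of_nonneg_left (one_sub_pow_le_mul_one_sub (by linarith [hz.1]) m) hC
    calc e z ≤ A * (1 - z) + q * e (z ^ m) := hstep z hz
      _ ≤ A * (1 - z) + q * (C * m * (1 - z) + q ^ n * M) := by
        gcongr
        exact (hCe _ (pow_mem_Ico_zero_one hz hm)).trans (by linarith)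
      _ = (A + q * (C * m)) * (1 - z) + q ^ (n + 1) * M := by ring

theorem tendsto_zero_of_le_mul_one_sub_add_mul_comp_pow (hm : m ≠ 0) (hA : 0 ≤ A) (hq0 : 0 ≤ q)
    (hq1 : q < 1) (he0 : ∀ z ∈ Ico (0 : ℝ) 1, 0 ≤ e z) (heM : ∀ z ∈ Ico (0 : ℝ) 1, e z ≤ M)
    (hstep : ∀ z ∈ Ico (0 : ℝ) 1, e z ≤ A * (1 - z) + q * e (z ^ m)) :
    Tendsto e (𝓝[<] 1) (𝓝 0) := by
  have hIco : Ico (0 : ℝ) 1 ∈ 𝓝[<] 1 :=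
    mem_of_superset (Ioo_mem_nhdsLT zero_lt_one) Ioo_subset_Ico_self
  refine tendsto_order.2 ⟨fun a ha => ?_, fun b hb => ?_⟩
  · filter_upwards [hIco] with z hz using ha.trans_le (he0 z hz)
  · have hpow : Tendsto (fun n => q ^ n * M) atTop (𝓝 0) := by
      simpa using (tendsto_pow_atTop_nhds_zero_of_lt_one hq0 hq1).mul_const M
    obtain ⟨n, hn⟩ := (hpow.eventually (gt_mem_nhds hb)).exists
    obtain ⟨C, -, hCe⟩ := exists_le_mul_one_sub_add_pow_mul hm hA hq0 heM hstep n
    have hlin : Tendsto (fun z : ℝ => C * (1 - z) + q ^ n * M) (𝓝[<] 1) (𝓝 (q ^ n * M)) := by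
      have hcont : Continuous fun z : ℝ => C * (1 - z) + q ^ n * M := by fun_prop
      simpa using (hcont.tendsto 1).mono_left nhdsWithin_le_nhds
    filter_upwards [hIco, hlin.eventually (gt_mem_nhds hn)] with z hz hzb
    exact (hCe z hz).trans_lt hzb

end Iteration

lemma goldenRatio_sq_mul_goldenConj_sq : φ ^ 2 * ψ ^ 2 = 1 := by
  rw [← mul_pow, goldenRatio_mul_goldenConj]
  norm_num

lemma goldenConj_sq_lt_one : ψ ^ 2 < 1 := by
  linarith [goldenConj_sq, goldenConj_neg]

lemma abs_recurrence_sub_goldenRatio_sq_le {x z : ℝ} (hx : 1 ≤ x) (hz0 : 0 ≤ z) (hz1 : z ≤ 1) :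
    |1 + z + z ^ 2 - z ^ 4 / x - φ ^ 2| ≤ 4 * (1 - z) + ψ ^ 2 * |x - φ ^ 2| := by
  have hx0 : 0 < x := by linarith
  have hsum : φ ^ 2 + ψ ^ 2 = 3 := by
    linarith [goldenRatio_sq, goldenConj_sq, goldenRatio_add_goldenConj]
  have hid : 1 + z + z ^ 2 - z ^ 4 / x - φ ^ 2
      = ((1 - z ^ 4) / x - ((1 - z) + (1 - z ^ 2))) + ψ ^ 2 * (x - φ ^ 2) / x := by
    have hprod := goldenRatio_sq_mul_goldenConj_sq
    generalize φ ^ 2 = a at hsum hprod ⊢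
    generalize ψ ^ 2 = b at hsum hprod ⊢
    field_simp
    linear_combination hprod - x * hsum
  have hz4 : 0 ≤ 1 - z ^ 4 := sub_nonneg.2 (pow_le_one₀ hz0 hz1)
  have hz4x : 0 ≤ (1 - z ^ 4) / x := div_nonneg hz4 hx0.le
  have hpoly : |(1 - z ^ 4) / x - ((1 - z) + (1 - z ^ 2))| ≤ 4 * (1 - z) := by
    have h4 : (1 - z ^ 4) / x ≤ 4 * (1 - z) :=
      (div_le_self hz4 hx).trans (by exact_mod_cast one_sub_pow_le_mul_one_sub (by linarith) 4)
    rw [abs_le]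
    constructor <;> nlinarith
  have hcontr : |ψ ^ 2 * (x - φ ^ 2) / x| ≤ ψ ^ 2 * |x - φ ^ 2| := by
    rw [abs_div, abs_mul, abs_of_nonneg (sq_nonneg ψ), abs_of_pos hx0]
    exact div_le_self (by positivity) hx
  rw [hid]
  exact (abs_add_le _ _).trans (add_le_add hpoly hcontr)

theorem tendsto_goldenRatio_sq_of_recurrence {u : ℝ → ℝ} (hu : ∀ z ∈ Ico (0 : ℝ) 1, 1 ≤ u z)
    (hrec : ∀ z ∈ Ico (0 : ℝ) 1, u z = 1 + z + z ^ 2 - z ^ 4 / u (z ^ 4)) :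
    Tendsto u (𝓝[<] 1) (𝓝 (φ ^ 2)) := by
  have hpow : ∀ z ∈ Ico (0 : ℝ) 1, z ^ 4 ∈ Ico (0 : ℝ) 1 := fun z hz =>
    pow_mem_Ico_zero_one hz four_ne_zero
  have hbound : ∀ z ∈ Ico (0 : ℝ) 1, |u z - φ ^ 2| ≤ 2 := by
    intro z hz
    have hle : u z ≤ 3 := by
      rw [hrec z hz]
      have : 0 ≤ z ^ 4 / u (z ^ 4) := div_nonneg (by positivity) (by linarith [hu _ (hpow z hz)])
      nlinarith [hz.1, hz.2]
    rw [abs_le]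
    constructor <;> linarith [hu z hz, goldenRatio_sq, one_lt_goldenRatio, goldenRatio_lt_two]
  rw [tendsto_iff_dist_tendsto_zero]
  simp only [Real.dist_eq]
  refine tendsto_zero_of_le_mul_one_sub_add_mul_comp_pow (m := 4) four_ne_zero zero_le_four
    (sq_nonneg ψ) goldenConj_sq_lt_one (fun z _ => abs_nonneg _) hbound fun z hz => ?_
  rw [hrec z hz]
  exact abs_recurrence_sub_goldenRatio_sq_le (hu _ (hpow z hz)) hz.1 hz.2.le

section PowerSeries

variable {c : ℕ → ℝ} {F : ℝ → ℝ}

lemma coeff_zero_le_of_hasSum_pow {x a : ℝ} (hc : ∀ n, 0 ≤ c n) (hx : 0 ≤ x)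
    (h : HasSum (fun n => c n * x ^ n) a) : c 0 ≤ a := by
  simpa using le_hasSum h 0 fun n _ => mul_nonneg (hc n) (pow_nonneg hx n)

lemma monotoneOn_of_hasSum_pow (hc : ∀ n, 0 ≤ c n)
    (hF : ∀ z ∈ Ico (0 : ℝ) 1, HasSum (fun n => c n * z ^ n) (F z)) :
    MonotoneOn F (Ico 0 1) := fun x hx y hy hxy =>
  hasSum_le (fun n => mul_le_mul_of_nonneg_left (pow_le_pow_left₀ hx.1 hxy n) (hc n))
    (hF x hx) (hF y hy)

end PowerSeries

/-- The limit of `μ(z) = F(z)/F(z⁴)` as `z → 1⁻` exists and equals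
`(3+√5)/2 = ρ²`, where `ρ = (1+√5)/2` is the golden ratio. -/
theorem stmt_5 (c : ℕ → ℝ) (F : ℝ → ℝ)
    (hc : ∀ n, c n = 0 ∨ c n = 1) (h0 : c 0 = 1)
    (hF : ∀ z : ℝ, |z| < 1 → HasSum (fun n => c n * z ^ n) (F z))
    (heq : ∀ z : ℝ, 0 ≤ z → z < 1 →
      F z = (1 + z + z ^ 2) * F (z ^ 4) - z ^ 4 * F (z ^ 16)) :
    (3 + Real.sqrt 5) / 2 = ((1 + Real.sqrt 5) / 2) ^ 2 ∧
    Filter.Tendsto (fun z : ℝ => F z / F (z ^ 4))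
      (nhdsWithin 1 (Set.Iio 1)) (nhds ((3 + Real.sqrt 5) / 2)) := by
  have hpow : ∀ z ∈ Ico (0 : ℝ) 1, z ^ 4 ∈ Ico (0 : ℝ) 1 := fun z hz =>
    pow_mem_Ico_zero_one hz four_ne_zero
  have hc0 : ∀ n, 0 ≤ c n := fun n => by rcases hc n with h | h <;> simp [h]
  have hF' : ∀ z ∈ Ico (0 : ℝ) 1, HasSum (fun n => c n * z ^ n) (F z) := fun z hz =>
    hF z (by rw [abs_of_nonneg hz.1]; exact hz.2)
  have hF1 : ∀ z ∈ Ico (0 : ℝ) 1, 1 ≤ F z := fun z hz =>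
    h0 ▸ coeff_zero_le_of_hasSum_pow hc0 hz.1 (hF' z hz)
  have hratio : ∀ z ∈ Ico (0 : ℝ) 1, 1 ≤ F z / F (z ^ 4) := fun z hz =>
    (one_le_div (by linarith [hF1 _ (hpow z hz)])).2 <| monotoneOn_of_hasSum_pow hc0 hF'
      (hpow z hz) hz (pow_le_of_le_one hz.1 hz.2.le four_ne_zero)
  have hrec : ∀ z ∈ Ico (0 : ℝ) 1,
      F z / F (z ^ 4) = 1 + z + z ^ 2 - z ^ 4 / (F (z ^ 4) / F ((z ^ 4) ^ 4)) := by
    intro z hz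
    have h4 := hF1 _ (hpow z hz)
    have h16 := hF1 _ (hpow _ (hpow z hz))
    rw [heq z hz.1 hz.2, ← pow_mul]
    field_simp
  have hφ : (3 + √5) / 2 = φ ^ 2 := by
    linear_combination (-1 / 4 : ℝ) * Real.sq_sqrt (show (0 : ℝ) ≤ 5 by norm_num)
  refine ⟨hφ, ?_⟩
  rw [hφ]
  exact tendsto_goldenRatio_sq_of_recurrence hratio hrec
end

section
/- Suppose polynomials p_0,...,p_M ∈ ℚ[z], not all zero with gcd(p_0,...,p_M)=1, and a rational function λ(z) satisfy λ(z)·Σ_{m=0}^M p_m(z) y^m = Σ_{m=0}^M p_m(z⁴)(1+z+z²-zy)^{M-m} identically in z and y. Then λ(z) = λ·z^N for some nonzero rational λ and integer N ≥ 0. -/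
/-!
Let `∑ pₘ uₘ = 1` be a Bézout relation and `qₘ ∈ ℚ[z]` the `yᵐ`-coefficient of the right-hand
side. Comparing coefficients gives `λ pₘ = qₘ`, so `λ = ∑ qₘ uₘ` is a polynomial `g`. If
`g(a) = 0` for some `a ≠ 0` in an algebraic closure, specialising `z = a` gives
`∑ pₘ(a⁴) (1 + a + a² - a y)^(M-m) = 0`; as `a ≠ 0` these powers are linearly independent, so
every `pₘ(a⁴)` vanishes, contradicting the Bézout relation. Hence `0` is the only root of `g`,
which is therefore a monomial.
-/

open Polynomial

theorem Polynomial.coeff_sum_C_mul_X_pow_of_injOn {R ι : Type*} [Semiring R] {s : Finset ι}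
    {e : ι → ℕ} (he : Set.InjOn e s) (c : ι → R) {i : ι} (hi : i ∈ s) :
    (∑ j ∈ s, C (c j) * X ^ e j).coeff (e i) = c i := by
  rw [finsetSum_coeff, Finset.sum_eq_single_of_mem i hi]
  · simp
  · intro j hj hji
    rw [coeff_C_mul_X_pow, if_neg fun h => hji (he hj hi h.symm)]

theorem Polynomial.eq_zero_of_sum_C_mul_sub_C_mul_X_pow_eq_zero {K ι : Type*} [Field K]
    {s : Finset ι} {e : ι → ℕ} (he : Set.InjOn e s) {c : ι → K} {a b : K} (ha : a ≠ 0)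
    (h : ∑ j ∈ s, C (c j) * (C b - C a * X) ^ e j = 0) {i : ι} (hi : i ∈ s) : c i = 0 := by
  have hcomp : (C b - C a * X).comp (C a⁻¹ * (C b - X)) = X := by
    simp only [sub_comp, C_comp, mul_comp, X_comp, ← mul_assoc, ← C_mul, mul_inv_cancel₀ ha,
      C_1, one_mul, sub_sub_cancel]
  have h' := congrArg (fun q : K[X] => (q.comp (C a⁻¹ * (C b - X))).coeff (e i)) h
  simpa only [sum_comp, mul_comp, pow_comp, C_comp, hcomp, zero_comp, coeff_zero,
    coeff_sum_C_mul_X_pow_of_injOn he c hi] using h'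

theorem Polynomial.eq_C_leadingCoeff_mul_X_pow_of_aeval_ne_zero {K L : Type*} [Field K] [Field L]
    [Algebra K L] [IsAlgClosed L] {g : K[X]} (h : ∀ a : L, a ≠ 0 → aeval a g ≠ 0) :
    g = C g.leadingCoeff * X ^ g.natDegree := by
  have hroots : g.aroots L = Multiset.replicate g.natDegree 0 := by
    rw [Multiset.eq_replicate, IsAlgClosed.card_aroots_eq_natDegree]
    exact ⟨rfl, fun a ha => by_contra fun ha0 => h a ha0 (mem_aroots.mp ha).2⟩
  apply map_injective (algebraMap K L) (algebraMap K L).injective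
  rw [(IsAlgClosed.splits (g.map (algebraMap K L))).eq_prod_roots, ← aroots_def, hroots]
  simp

theorem eq_algebraMap_sum_mul_of_mul_algebraMap_eq {R A ι : Type*} [CommRing R] [CommRing A]
    [Algebra R A] {s : Finset ι} {p u q : ι → R} (hu : ∑ i ∈ s, p i * u i = 1) {lam : A}
    (h : ∀ i ∈ s, lam * algebraMap R A (p i) = algebraMap R A (q i)) :
    lam = algebraMap R A (∑ i ∈ s, q i * u i) := by
  calc lam = lam * algebraMap R A (∑ i ∈ s, p i * u i) := by rw [hu, map_one, mul_one]
    _ = _ := by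
      simp only [map_sum, map_mul, Finset.mul_sum, ← mul_assoc]
      exact Finset.sum_congr rfl fun i hi => by rw [h i hi]

theorem Polynomial.aeval_ne_zero_of_C_mul_eq_sum {K L ι : Type*} [Field K] [Field L] [Algebra K L]
    {s : Finset ι} {e : ι → ℕ} (he : Set.InjOn e s) {p u : ι → K[X]}
    (hu : ∑ i ∈ s, p i * u i = 1) {g : K[X]} {P : K[X][X]} {r b : K[X]}
    (h : C g * P = ∑ i ∈ s, C ((p i).comp r) * (C b - C X * X) ^ e i) {a : L} (ha : a ≠ 0) :
    aeval a g ≠ 0 := by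
  intro hg
  have hsum : ∑ i ∈ s, C (aeval (aeval a r) (p i)) * (C (aeval a b) - C a * X) ^ e i = 0 := by
    have := congrArg (map (aeval a).toRingHom) h
    simpa [Polynomial.map_sum, Polynomial.map_mul, Polynomial.map_pow, Polynomial.map_sub, hg,
      aeval_comp] using this.symm
  have hp (i) (hi : i ∈ s) : aeval (aeval a r) (p i) = 0 :=
    eq_zero_of_sum_C_mul_sub_C_mul_X_pow_eq_zero he ha hsum hi
  have hone := congrArg (aeval (aeval a r)) hu
  simp only [map_sum, map_mul, map_one] at hone
  rw [Finset.sum_eq_zero fun i hi => by rw [hp i hi, zero_mul]] at hone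
  exact zero_ne_one hone

theorem stmt_12_general (M : ℕ) (p : Fin (M + 1) → Polynomial ℚ)
    (hgcd : Finset.univ.gcd p = 1)
    (lam : RatFunc ℚ)
    (hid : Polynomial.C lam *
        (∑ m : Fin (M + 1),
          Polynomial.C (algebraMap (Polynomial ℚ) (RatFunc ℚ) (p m)) *
            Polynomial.X ^ (m : ℕ))
      = ∑ m : Fin (M + 1),
          Polynomial.C (algebraMap (Polynomial ℚ) (RatFunc ℚ)
              ((p m).comp (Polynomial.X ^ 4))) *
            (Polynomial.C (algebraMap (Polynomial ℚ) (RatFunc ℚ)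
                (1 + Polynomial.X + Polynomial.X ^ 2)) -
              Polynomial.C (algebraMap (Polynomial ℚ) (RatFunc ℚ) Polynomial.X) *
                Polynomial.X) ^ (M - (m : ℕ))) :
    ∃ (l : ℚ) (N : ℕ), l ≠ 0 ∧ lam = RatFunc.C l * RatFunc.X ^ N := by
  obtain ⟨u, hu⟩ := Finset.univ.gcd_eq_sum_mul p
  rw [hgcd, eq_comm] at hu
  set φ := algebraMap ℚ[X] (RatFunc ℚ)
  set P : ℚ[X][X] := ∑ m : Fin (M + 1), C (p m) * X ^ (m : ℕ)
  set Q : ℚ[X][X] := ∑ m : Fin (M + 1),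
    C ((p m).comp (X ^ 4)) * (C (1 + X + X ^ 2) - C X * X) ^ (M - (m : ℕ))
  have hPQ : C lam * P.map φ = Q.map φ := by
    simpa only [P, Q, Polynomial.map_sum, Polynomial.map_mul, Polynomial.map_pow,
      Polynomial.map_sub, map_C, map_X] using hid
  have hlam : lam = φ (∑ m : Fin (M + 1), Q.coeff m * u m) := by
    refine eq_algebraMap_sum_mul_of_mul_algebraMap_eq hu fun m _ => ?_
    have hm := congrArg (coeff · m) hPQ
    simpa [coeff_map, P, coeff_sum_C_mul_X_pow_of_injOn Fin.val_injective.injOn] using hm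
  set g := ∑ m : Fin (M + 1), Q.coeff m * u m
  have hgPQ : C g * P = Q :=
    map_injective φ (RatFunc.algebraMap_injective ℚ) (by simpa [← hlam] using hPQ)
  have hg (a : AlgebraicClosure ℚ) (ha : a ≠ 0) : aeval a g ≠ 0 :=
    aeval_ne_zero_of_C_mul_eq_sum (fun m _ n _ hmn => by omega) hu hgPQ ha
  refine ⟨g.leadingCoeff, g.natDegree, ?_, ?_⟩
  · exact leadingCoeff_ne_zero.mpr fun h0 => hg 1 one_ne_zero (by simp [h0])
  · rw [hlam]
    conv_lhs => rw [eq_C_leadingCoeff_mul_X_pow_of_aeval_ne_zero hg]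
    rw [map_mul, map_pow, RatFunc.algebraMap_C, RatFunc.algebraMap_X]

/-- If `p_0,…,p_M ∈ ℚ[z]`, not all zero, with `gcd(p_0,…,p_M) = 1`, and a rational
function `λ(z)` satisfy `λ(z)·Σ p_m(z) yᵐ = Σ p_m(z⁴)(1+z+z²-zy)^{M-m}` identically,
then `λ(z) = λ·z^N` for some nonzero rational `λ` and some `N ≥ 0`. -/
theorem stmt_12 (M : ℕ) (p : Fin (M + 1) → Polynomial ℚ)
    (hne : ∃ m, p m ≠ 0)
    (hgcd : Finset.univ.gcd p = 1)
    (lam : RatFunc ℚ)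
    (hid : Polynomial.C lam *
        (∑ m : Fin (M + 1),
          Polynomial.C (algebraMap (Polynomial ℚ) (RatFunc ℚ) (p m)) *
            Polynomial.X ^ (m : ℕ))
      = ∑ m : Fin (M + 1),
          Polynomial.C (algebraMap (Polynomial ℚ) (RatFunc ℚ)
              ((p m).comp (Polynomial.X ^ 4))) *
            (Polynomial.C (algebraMap (Polynomial ℚ) (RatFunc ℚ)
                (1 + Polynomial.X + Polynomial.X ^ 2)) -
              Polynomial.C (algebraMap (Polynomial ℚ) (RatFunc ℚ) Polynomial.X) *
                Polynomial.X) ^ (M - (m : ℕ))) :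
    ∃ (l : ℚ) (N : ℕ), l ≠ 0 ∧ lam = RatFunc.C l * RatFunc.X ^ N :=
  stmt_12_general M p hgcd lam hid
end
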